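/- arXiv:1507.01280 — 4 statements merged into one kernel-verified Lean document; each statement's English description precedes it below -/
import Mathlib

section
/- For α > 0, α > β, β ≠ 0, and z ≠ 0, the derivative of the Wright-type function satisfies (d/dz) e_{α,β}^{μ,δ}(z) = -(1/(βz)) [ e_{α,β}^{μ,δ-1}(z) + (1-δ) e_{α,β}^{μ,δ}(z) ]. -/
/-!
The coefficients `c n = 1 / (Γ(α n + μ) Γ(δ - β n))` decay faster than any geometric sequence:
`Γ(α n + μ)` outgrows `q ^ n Γ(β n + 1 - δ)` because `α > β`, and for `β > 0` the reflection formula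
bounds `1 / Γ(δ - β n)` by `Γ(β n + 1 - δ) / π`. Hence the series is entire and can be
differentiated termwise, `z f'(z) = ∑ n c n zⁿ`. On the other side `1 / Γ(s) = s / Γ(s + 1)`
turns the coefficients for `δ - 1` into `(δ - 1 - β n) c n`, so that
`e^{μ,δ-1} + (1 - δ) e^{μ,δ} = -β ∑ n c n zⁿ`.
-/

open Filter

/-- The Wright-type function `e_{α,β}^{μ,δ}(z) = Σ_{n=0}^∞ zⁿ/(Γ(αn+μ)Γ(δ-βn))`,
with the convention `1/Γ = 0` at the poles of `Γ` (in Lean, `Complex.Gamma` vanishes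
at nonpositive integers and division by zero is zero). -/
noncomputable def wrightE (α β μ δ : ℝ) (z : ℂ) : ℂ :=
  ∑' n : ℕ, z ^ n / (Complex.Gamma ((α * n + μ : ℝ) : ℂ) * Complex.Gamma ((δ - β * n : ℝ) : ℂ))

lemma tendsto_mul_natCast_add_atTop {u : ℝ} (hu : 0 < u) (v : ℝ) :
    Tendsto (fun n : ℕ => u * n + v) atTop atTop :=
  tendsto_atTop_add_const_right _ v (tendsto_natCast_atTop_atTop.const_mul_atTop hu)

namespace Real

lemma one_le_Gamma {x : ℝ} (hx : 2 ≤ x) : 1 ≤ Gamma x :=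
  Gamma_two ▸ Gamma_strictMonoOn_Ici.monotoneOn (Set.mem_Ici.mpr le_rfl) hx hx

lemma Gamma_mul_pow_le_Gamma_add {x : ℝ} (hx : 0 < x) (k : ℕ) :
    Gamma x * x ^ k ≤ Gamma (x + k) := by
  induction k with
  | zero => simp
  | succ k ih =>
    have hxk : 0 < x + k := by positivity
    calc Gamma x * x ^ (k + 1) = x * (Gamma x * x ^ k) := by ring
      _ ≤ (x + k) * Gamma (x + k) := by
        gcongr
        linarith [k.cast_nonneg (α := ℝ)]
      _ = Gamma (x + (k + 1 : ℕ)) := by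
        rw [Nat.cast_succ, ← add_assoc, Gamma_add_one hxk.ne']

lemma abs_inv_Gamma_le {s : ℝ} (hs : s < 1) : |(Gamma s)⁻¹| ≤ Gamma (1 - s) / π := by
  have hG : 0 < Gamma (1 - s) := Gamma_pos_of_pos (by linarith)
  have hrefl : (Gamma s)⁻¹ = sin (π * s) * Gamma (1 - s) / π := by
    have h := Gamma_mul_Gamma_one_sub s
    rcases eq_or_ne (sin (π * s)) 0 with hsin | hsin
    · rw [hsin, div_zero, mul_eq_zero] at h
      simp [hsin, h.resolve_right hG.ne']
    · have hΓ : Gamma s ≠ 0 := left_ne_zero_of_mul (h ▸ div_ne_zero pi_ne_zero hsin)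
      field_simp
      rw [mul_right_comm, h, div_mul_cancel₀ _ hsin]
  rw [hrefl, abs_div, abs_mul, abs_of_pos pi_pos, abs_of_pos hG]
  gcongr
  exact mul_le_of_le_one_left hG.le (abs_sin_le_one _)

lemma eventually_pow_mul_Gamma_le_Gamma {a b : ℝ} (hb : 0 < b) (hba : b < a) (c e : ℝ)
    {q : ℝ} (hq : 1 ≤ q) :
    ∀ᶠ n : ℕ in atTop, q ^ n * Gamma (b * n + e) ≤ Gamma (a * n + c) := by
  -- `Γ(b n + e)` is multiplied by at least `(b n + e) ^ k` on the way up to `Γ(a n + c)`,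
  -- with `k ≈ n / m` steps of length one; once `b n + e ≥ q ^ m` this beats `q ^ n`.
  obtain ⟨m, hm⟩ := exists_nat_ge (2 / (a - b))
  have hm0 : (0 : ℝ) < m := lt_of_lt_of_le (by have := sub_pos.mpr hba; positivity) hm
  have hmab : 2 ≤ (a - b) * m := by
    rwa [div_le_iff₀' (sub_pos.mpr hba)] at hm
  filter_upwards [(tendsto_mul_natCast_add_atTop hb e).eventually_ge_atTop (max 2 (q ^ m)),
    (tendsto_mul_natCast_add_atTop (by linarith : 0 < (a - b) / 2) (c - e - 1)).eventually_ge_atTop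
      0]
    with n hx hroom
  set x := b * n + e
  set k := ⌈(n : ℝ) / m⌉₊
  have hx2 : 2 ≤ x := le_of_max_le_left hx
  have hk : (k : ℝ) < n / m + 1 := Nat.ceil_lt_add_one (by positivity)
  have hnk : n ≤ m * k := by
    have : (n : ℝ) / m ≤ k := Nat.le_ceil _
    rw [div_le_iff₀ hm0] at this
    exact_mod_cast (by linarith : (n : ℝ) ≤ m * k)
  have hkn : (k : ℝ) ≤ (a - b) / 2 * n + 1 := by
    have : (n : ℝ) / m ≤ (a - b) / 2 * n := by
      rw [div_le_iff₀ hm0]; nlinarith [n.cast_nonneg (α := ℝ)]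
    linarith
  have hΓx : 0 ≤ Gamma x := Gamma_nonneg_of_nonneg (by linarith)
  calc q ^ n * Gamma x ≤ (q ^ m) ^ k * Gamma x := by
        rw [← pow_mul]
        exact mul_le_mul_of_nonneg_right (pow_le_pow_right₀ hq hnk) hΓx
    _ ≤ Gamma x * x ^ k := by
        rw [mul_comm]
        exact mul_le_mul_of_nonneg_left
          (pow_le_pow_left₀ (by positivity) (le_of_max_le_right hx) k) hΓx
    _ ≤ Gamma (x + k) := Gamma_mul_pow_le_Gamma_add (by linarith) k
    _ ≤ Gamma (a * n + c) :=
        Gamma_strictMonoOn_Ici.monotoneOn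
          (Set.mem_Ici.mpr (by linarith [k.cast_nonneg (α := ℝ)]))
          (Set.mem_Ici.mpr (by nlinarith)) (by simp only [x]; nlinarith)

lemma eventually_pow_le_Gamma {a : ℝ} (ha : 0 < a) (c : ℝ) {q : ℝ} (hq : 1 ≤ q) :
    ∀ᶠ n : ℕ in atTop, q ^ n ≤ Gamma (a * n + c) := by
  filter_upwards [eventually_pow_mul_Gamma_le_Gamma (half_pos ha) (half_lt_self ha) c 2 hq]
    with n hn
  have hΓ : 1 ≤ Gamma (a / 2 * n + 2) := one_le_Gamma (le_add_of_nonneg_left (by positivity))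
  exact (le_mul_of_one_le_right (by positivity) hΓ).trans hn

end Real

section PowerSeries

variable {𝕜 : Type*} [RCLike 𝕜] {c : ℕ → 𝕜}

lemma summable_norm_mul_pow_of_bounded
    (hc : ∀ q : ℝ, 1 ≤ q → ∃ C, ∀ᶠ n in atTop, ‖c n‖ * q ^ n ≤ C) (r : ℝ) :
    Summable fun n => ‖c n‖ * r ^ n := by
  obtain ⟨C, hC⟩ := hc (2 * (|r| + 1)) (by linarith [abs_nonneg r])
  refine .of_norm_bounded_eventually_nat (summable_geometric_two.mul_left C) ?_
  filter_upwards [hC] with n hn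
  calc ‖‖c n‖ * r ^ n‖ = ‖c n‖ * |r| ^ n := by
        rw [norm_mul, norm_norm, norm_pow, Real.norm_eq_abs]
    _ ≤ ‖c n‖ * (|r| + 1) ^ n := by gcongr; linarith
    _ = ‖c n‖ * (2 * (|r| + 1)) ^ n * (1 / 2) ^ n := by
        rw [mul_pow, one_div_pow, mul_assoc, mul_assoc, mul_comm _ ((|r| + 1) ^ n)]
        field_simp
    _ ≤ C * (1 / 2) ^ n := by gcongr

lemma summable_mul_pow (hc : ∀ r : ℝ, Summable fun n => ‖c n‖ * r ^ n) (z : 𝕜) :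
    Summable fun n => c n * z ^ n :=
  .of_norm <| by simpa only [norm_mul, norm_pow] using hc ‖z‖

lemma hasDerivAt_tsum_mul_pow (hc : ∀ r : ℝ, Summable fun n => ‖c n‖ * r ^ n) (z : 𝕜) :
    HasDerivAt (fun w => ∑' n, c n * w ^ n) (∑' n, n * c n * z ^ (n - 1)) z := by
  set R := ‖z‖ + 1
  have hR : 1 ≤ R := by simp only [R]; linarith [norm_nonneg z]
  refine hasDerivAt_tsum_of_isPreconnected (g' := fun n w => n * c n * w ^ (n - 1))
    (hc (2 * R)) Metric.isOpen_ball (convex_ball (0 : 𝕜) R).isPreconnected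
    (fun n y _ => ((hasDerivAt_pow n y).const_mul (c n)).congr_deriv (by ring))
    (fun n y hy => ?_) (Metric.mem_ball_self (by linarith)) (summable_mul_pow hc 0)
    (by simp [R])
  have hy : ‖y‖ ≤ R := by simpa using (Metric.mem_ball.mp hy).le
  calc ‖(n : 𝕜) * c n * y ^ (n - 1)‖ = ‖c n‖ * (n * ‖y‖ ^ (n - 1)) := by
        rw [norm_mul, norm_mul, norm_pow, RCLike.norm_natCast]; ring
    _ ≤ ‖c n‖ * (2 ^ n * R ^ n) := by
        gcongr
        · exact_mod_cast n.lt_two_pow_self.le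
        · exact (pow_le_pow_left₀ (norm_nonneg y) hy _).trans
            (pow_le_pow_right₀ hR (Nat.sub_le n 1))
    _ = ‖c n‖ * (2 * R) ^ n := by rw [mul_pow]

lemma tsum_natCast_mul_mul_pow_sub_one {z : 𝕜} (hz : z ≠ 0) :
    ∑' n, n * c n * z ^ (n - 1) = z⁻¹ * ∑' n, n * c n * z ^ n := by
  rw [← tsum_mul_left]
  congr 1 with (_ | n)
  · simp
  · rw [Nat.add_sub_cancel, pow_succ]
    field_simp

end PowerSeries

section Wright

variable {α β μ δ : ℝ}

noncomputable def wrightCoeff (α β μ δ : ℝ) (n : ℕ) : ℂ :=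
  (Complex.Gamma ((α * n + μ : ℝ) : ℂ) * Complex.Gamma ((δ - β * n : ℝ) : ℂ))⁻¹

lemma wrightE_eq_tsum (α β μ δ : ℝ) :
    wrightE α β μ δ = fun z => ∑' n, wrightCoeff α β μ δ n * z ^ n := by
  funext z
  simp only [wrightE, wrightCoeff, div_eq_inv_mul]

lemma norm_wrightCoeff (α β μ δ : ℝ) (n : ℕ) :
    ‖wrightCoeff α β μ δ n‖ = |Real.Gamma (α * n + μ)|⁻¹ * |Real.Gamma (δ - β * n)|⁻¹ := by
  simp only [wrightCoeff, Complex.Gamma_ofReal, norm_inv, norm_mul, Complex.norm_real,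
    Real.norm_eq_abs, mul_inv]

lemma wrightCoeff_sub_one (α β μ δ : ℝ) (n : ℕ) :
    wrightCoeff α β μ (δ - 1) n = ((δ - 1 - β * n : ℝ) : ℂ) * wrightCoeff α β μ δ n := by
  have hshift : ((δ - 1 - β * n : ℝ) : ℂ) + 1 = ((δ - β * n : ℝ) : ℂ) := by push_cast; ring
  have hrec := Complex.one_div_Gamma_eq_self_mul_one_div_Gamma_add_one ((δ - 1 - β * n : ℝ) : ℂ)
  rw [hshift] at hrec
  rw [wrightCoeff, wrightCoeff, mul_inv, mul_inv, hrec]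
  ring

lemma exists_norm_wrightCoeff_mul_pow_le (hα : 0 < α) (hβα : β < α) {q : ℝ} (hq : 1 ≤ q) :
    ∃ C, ∀ᶠ n in atTop, ‖wrightCoeff α β μ δ n‖ * q ^ n ≤ C := by
  rcases lt_or_ge 0 β with hβ | hβ
  · refine ⟨1, ?_⟩
    filter_upwards [Real.eventually_pow_mul_Gamma_le_Gamma hβ hβα μ (1 - δ) hq,
      (tendsto_mul_natCast_add_atTop hβ (1 - δ)).eventually_gt_atTop 0,
      (tendsto_mul_natCast_add_atTop hα μ).eventually_gt_atTop 0] with n hgrow hneg hpos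
    have hΓ := Real.Gamma_pos_of_pos hpos
    have hrefl : |Real.Gamma (δ - β * n)|⁻¹ ≤ Real.Gamma (β * n + (1 - δ)) := by
      rw [← abs_inv, show β * n + (1 - δ) = 1 - (δ - β * n) by ring]
      exact (Real.abs_inv_Gamma_le (by linarith)).trans
        (div_le_self (Real.Gamma_pos_of_pos (by linarith)).le (by linarith [Real.pi_gt_three]))
    rw [norm_wrightCoeff, abs_of_pos hΓ]
    calc (Real.Gamma (α * n + μ))⁻¹ * |Real.Gamma (δ - β * n)|⁻¹ * q ^ n
        ≤ (Real.Gamma (α * n + μ))⁻¹ * Real.Gamma (β * n + (1 - δ)) * q ^ n := by gcongr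
      _ = q ^ n * Real.Gamma (β * n + (1 - δ)) / Real.Gamma (α * n + μ) := by ring
      _ ≤ 1 := div_le_one_of_le₀ hgrow hΓ.le
  · set K := max 1 |Real.Gamma δ|⁻¹
    have hK : ∀ᶠ n : ℕ in atTop, |Real.Gamma (δ - β * n)|⁻¹ ≤ K := by
      rcases hβ.lt_or_eq with hβ | rfl
      · filter_upwards [(tendsto_mul_natCast_add_atTop (neg_pos.2 hβ) δ).eventually_ge_atTop 2]
          with n hn
        have h1 : 1 ≤ |Real.Gamma (δ - β * n)| :=
          (Real.one_le_Gamma (by linarith)).trans (le_abs_self _)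
        exact (inv_le_one_of_one_le₀ h1).trans (le_max_left _ _)
      · simp [K]
    refine ⟨K, ?_⟩
    filter_upwards [hK, Real.eventually_pow_le_Gamma hα μ hq] with n hKn hgrow
    have hΓ : 0 < Real.Gamma (α * n + μ) := lt_of_lt_of_le (by positivity) hgrow
    rw [norm_wrightCoeff, abs_of_pos hΓ]
    calc (Real.Gamma (α * n + μ))⁻¹ * |Real.Gamma (δ - β * n)|⁻¹ * q ^ n
        ≤ (Real.Gamma (α * n + μ))⁻¹ * K * q ^ n := by gcongr
      _ = K * (q ^ n / Real.Gamma (α * n + μ)) := by ring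
      _ ≤ K * 1 := by gcongr; exact div_le_one_of_le₀ hgrow hΓ.le
      _ = K := mul_one K

lemma summable_norm_wrightCoeff_mul_pow (hα : 0 < α) (hβα : β < α) (r : ℝ) :
    Summable fun n => ‖wrightCoeff α β μ δ n‖ * r ^ n :=
  summable_norm_mul_pow_of_bounded (fun _ hq => exists_norm_wrightCoeff_mul_pow_le hα hβα hq) r

lemma wrightE_sub_one_add_mul (hα : 0 < α) (hβα : β < α) (z : ℂ) :
    wrightE α β μ (δ - 1) z + (1 - δ) * wrightE α β μ δ z
      = -β * ∑' n, n * wrightCoeff α β μ δ n * z ^ n := by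
  have hc := summable_norm_wrightCoeff_mul_pow (μ := μ) (δ := δ) hα hβα
  have hc' := summable_norm_wrightCoeff_mul_pow (μ := μ) (δ := δ - 1) hα hβα
  simp only [wrightE_eq_tsum]
  rw [← tsum_mul_left, ← tsum_mul_left,
    ← (summable_mul_pow hc' z).tsum_add ((summable_mul_pow hc z).mul_left _)]
  congr 1 with n
  rw [wrightCoeff_sub_one]
  push_cast
  ring

end Wright

/-- Differentiation formula (8) for the Wright-type function. -/
theorem wright_deriv (α β μ δ : ℝ) (hα : 0 < α) (hβα : β < α) (hβ : β ≠ 0)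
    (z : ℂ) (hz : z ≠ 0) :
    deriv (wrightE α β μ δ) z
      = -(1 / ((β : ℂ) * z)) * (wrightE α β μ (δ - 1) z + (1 - (δ : ℂ)) * wrightE α β μ δ z) := by
  have hc := summable_norm_wrightCoeff_mul_pow (μ := μ) (δ := δ) hα hβα
  rw [wrightE_sub_one_add_mul hα hβα z, wrightE_eq_tsum, (hasDerivAt_tsum_mul_pow hc z).deriv,
    tsum_natCast_mul_mul_pow_sub_one hz]
  have hβ' : (β : ℂ) ≠ 0 := Complex.ofReal_ne_zero.mpr hβ
  field_simp
end

section
/- Let τ : [0,1] → ℝ be continuous with τ(0) = 0, and let P ∈ C¹ with P(t,s) = P₁(t)·P₂(s) where P₂(1) = 0, P₁ and P₂' continuously differentiable and P₂'(t) ≠ 0 on [0,1]. Then ∫₀¹ τ(t) ∫ₜ¹ τ(s) P₁(t) P₂'(s) ds dt = (1/2)[ (P₁(0)/P₂'(0)) (∫₀¹ τ(s) P₂'(s) ds)² + ∫₀¹ (P₁(t)/P₂'(t))' (∫ₜ¹ τ(s) P₂'(s) ds)² dt ]. -/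
/-!
Write `F t = ∫ₜ¹ τ P₂'` and `g = P₁ / P₂'`. The inner integral on the left is `P₁ t · F t`, so the
left side is `∫₀¹ g · (τ P₂') · F`. Since `(F²)' = -2 τ P₂' F`, this is `-½ ∫₀¹ g · (F²)'`, and
integrating by parts with `F 1 = 0` gives the right side.
-/

open MeasureTheory intervalIntegral Set

theorem integral_mul_mul_integral_eq_half {a b : ℝ} {f g g' : ℝ → ℝ} (hf : Continuous f)
    (hg : ∀ x ∈ uIcc a b, HasDerivAt g (g' x) x) (hg' : IntervalIntegrable g' volume a b) :
    ∫ t in a..b, g t * f t * ∫ s in t..b, f s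
      = (1 / 2) * (g a * (∫ s in a..b, f s) ^ 2
          + ∫ t in a..b, g' t * (∫ s in t..b, f s) ^ 2) := by
  set F : ℝ → ℝ := fun t => ∫ s in t..b, f s
  have hF : ∀ t, HasDerivAt F (-f t) t := fun t =>
    integral_hasDerivAt_left (hf.intervalIntegrable _ _) (hf.stronglyMeasurableAtFilter _ _)
      hf.continuousAt
  have hFsq : ∀ t ∈ uIcc a b, HasDerivAt (fun t => F t ^ 2) (-2 * (f t * F t)) t :=
    fun t _ => ((hF t).pow 2).congr_deriv (by ring)
  have hFc : Continuous F := continuous_iff_continuousAt.2 fun t => (hF t).continuousAt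
  have hFsq_int : IntervalIntegrable (fun t => -2 * (f t * F t)) volume a b :=
    (continuous_const.mul (hf.mul hFc)).intervalIntegrable a b
  have hibp := integral_mul_deriv_eq_deriv_mul hg hFsq hg' hFsq_int
  simp only [F, integral_same] at hibp
  calc ∫ t in a..b, g t * f t * F t
      = -(1 / 2) * ∫ t in a..b, g t * (-2 * (f t * F t)) := by
        rw [← intervalIntegral.integral_const_mul]; congr 1; ext t; ring
    _ = _ := by rw [hibp]; ring

theorem uniqueness_ibp_identity_general
    (τ P₁ P₂ : ℝ → ℝ)
    (hτ : Continuous τ)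
    (hP₁ : ContDiff ℝ 1 P₁) (hP₂ : ContDiff ℝ 2 P₂)
    (hP₂' : ∀ t ∈ Icc (0:ℝ) 1, deriv P₂ t ≠ 0) :
    ∫ t in (0:ℝ)..1, τ t * ∫ s in t..(1:ℝ), τ s * P₁ t * deriv P₂ s
      = (1 / 2) * ((P₁ 0 / deriv P₂ 0) * (∫ s in (0:ℝ)..1, τ s * deriv P₂ s) ^ 2
          + ∫ t in (0:ℝ)..1,
              deriv (fun t => P₁ t / deriv P₂ t) t * (∫ s in t..(1:ℝ), τ s * deriv P₂ s) ^ 2) := by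
  have hP₂d : ContDiff ℝ 1 (deriv P₂) := hP₂.deriv'
  set U := {t | deriv P₂ t ≠ 0}
  have hU : IsOpen U := isOpen_ne_fun hP₂d.continuous continuous_const
  have hIccU : uIcc (0:ℝ) 1 ⊆ U := by rw [uIcc_of_le zero_le_one]; exact hP₂'
  have hg : ContDiffOn ℝ 1 (fun t => P₁ t / deriv P₂ t) U :=
    hP₁.contDiffOn.div hP₂d.contDiffOn fun _ ht => ht
  rw [← integral_mul_mul_integral_eq_half (f := fun s => τ s * deriv P₂ s)
    (hτ.mul hP₂d.continuous)
    (fun t ht => ((hg.differentiableOn one_ne_zero t (hIccU ht)).differentiableAt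
      (hU.mem_nhds (hIccU ht))).hasDerivAt)
    ((hg.continuousOn_deriv_of_isOpen hU le_rfl).mono hIccU).intervalIntegrable]
  refine integral_congr fun t ht => ?_
  have ht' : deriv P₂ t ≠ 0 := hIccU ht
  simp only [← intervalIntegral.integral_const_mul]
  refine integral_congr fun s _ => ?_
  field_simp

/-- Key integration-by-parts identity used in the uniqueness proof
(computation of `I_{1,2}`). -/
theorem uniqueness_ibp_identity
    (τ P₁ P₂ : ℝ → ℝ)
    (hτ : Continuous τ) (hτ0 : τ 0 = 0)
    (hP₁ : ContDiff ℝ 1 P₁) (hP₂ : ContDiff ℝ 2 P₂)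
    (hP₂1 : P₂ 1 = 0)
    (hP₂' : ∀ t ∈ Icc (0:ℝ) 1, deriv P₂ t ≠ 0) :
    ∫ t in (0:ℝ)..1, τ t * ∫ s in t..(1:ℝ), τ s * P₁ t * deriv P₂ s
      = (1 / 2) * ((P₁ 0 / deriv P₂ 0) * (∫ s in (0:ℝ)..1, τ s * deriv P₂ s) ^ 2
          + ∫ t in (0:ℝ)..1,
              deriv (fun t => P₁ t / deriv P₂ t) t * (∫ s in t..(1:ℝ), τ s * deriv P₂ s) ^ 2) :=
  uniqueness_ibp_identity_general τ P₁ P₂ hτ hP₁ hP₂ hP₂'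
end

section
/- Under the hypotheses of the previous identity, if additionally c·(P₁(0)/P₂'(0)) ≤ 0 and c·(P₁(t)/P₂'(t))' ≤ 0 for all t ∈ [0,1] for a real constant c, then c·∫₀¹ τ(t) ∫ₜ¹ τ(s) P₁(t) P₂'(s) ds dt ≤ 0. -/
open MeasureTheory intervalIntegral Set

/-! With `f = τ P₂'` and `G t = ∫ₜ¹ f`, the claim reads `∫₀¹ q f G ≤ 0` for the weight
`q = c P₁ / P₂'`. Since `f G = -(G²)'/2` and `G 1 = 0`, integration by parts gives
`2 ∫₀¹ q f G = q 0 · G 0² + ∫₀¹ q' G²`, and both terms are `≤ 0`. -/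

theorem integral_mul_mul_integral_nonpos {f r : ℝ → ℝ} {a b : ℝ} (hab : a ≤ b)
    (hf : Continuous f) (hr : ContinuousOn r (Icc a b))
    (hr_diff : ∀ x ∈ Ioo a b, DifferentiableAt ℝ r x) (hr' : ∀ x ∈ Ioo a b, deriv r x ≤ 0)
    (hra : r a ≤ 0) :
    ∫ t in a..b, r t * f t * ∫ s in t..b, f s ≤ 0 := by
  set G : ℝ → ℝ := fun t => ∫ s in t..b, f s
  have hG : ∀ t, HasDerivAt G (-f t) t := fun t =>
    integral_hasDerivAt_left (hf.intervalIntegrable t b) (hf.stronglyMeasurableAtFilter _ _)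
      hf.continuousAt
  have hGc : Continuous G := continuous_iff_continuousAt.mpr fun t => (hG t).continuousAt
  -- `-r G²` has derivative `-r' G² + 2 r f G ≥ 2 r f G`.
  have hbound : ∫ t in a..b, 2 * (r t * f t * G t) ≤ -r b * G b ^ 2 - -r a * G a ^ 2 := by
    refine integral_le_sub_of_hasDeriv_right_of_le hab
      (hr.neg.mul (hGc.pow 2).continuousOn)
      (fun x hx => ((hr_diff x hx).hasDerivAt.neg.mul ((hG x).pow 2)).hasDerivWithinAt)
      ((continuousOn_const.mul ((hr.mul hf.continuousOn).mul hGc.continuousOn)).integrableOn_Icc)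
      fun x hx => ?_
    have := mul_nonneg (neg_nonneg.mpr (hr' x hx)) (sq_nonneg (G x))
    simp only [Pi.neg_apply, Pi.pow_apply, Nat.cast_ofNat, Nat.add_one_sub_one, pow_one]
    nlinarith
  have hGb : G b = 0 := integral_same
  rw [intervalIntegral.integral_const_mul, hGb] at hbound
  nlinarith [mul_nonpos_of_nonpos_of_nonneg hra (sq_nonneg (G a))]

theorem uniqueness_sign_condition_general
    (τ P₁ P₂ : ℝ → ℝ) (c : ℝ)
    (hτ : Continuous τ)
    (hP₁ : ContDiff ℝ 1 P₁) (hP₂ : ContDiff ℝ 2 P₂)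
    (hP₂' : ∀ t ∈ Icc (0:ℝ) 1, deriv P₂ t ≠ 0)
    (hc0 : c * (P₁ 0 / deriv P₂ 0) ≤ 0)
    (hc1 : ∀ t ∈ Icc (0:ℝ) 1, c * deriv (fun t => P₁ t / deriv P₂ t) t ≤ 0) :
    c * ∫ t in (0:ℝ)..1, τ t * ∫ s in t..(1:ℝ), τ s * P₁ t * deriv P₂ s ≤ 0 := by
  set g := deriv P₂
  set q : ℝ → ℝ := fun t => P₁ t / g t
  have hq : ∀ x ∈ Icc (0:ℝ) 1, DifferentiableAt ℝ q x := fun x hx =>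
    (hP₁.differentiable one_ne_zero x).div (hP₂.differentiable_deriv_two x) (hP₂' x hx)
  have hrewrite : c * ∫ t in (0:ℝ)..1, τ t * ∫ s in t..(1:ℝ), τ s * P₁ t * g s
      = ∫ t in (0:ℝ)..1, c * q t * (τ t * g t) * ∫ s in t..(1:ℝ), τ s * g s := by
    rw [← intervalIntegral.integral_const_mul]
    refine integral_congr fun t ht => ?_
    have hgt := hP₂' t (uIcc_of_le (zero_le_one' ℝ) ▸ ht)
    simp only [q, mul_assoc, mul_left_comm _ (P₁ t), intervalIntegral.integral_const_mul]
    field_simp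
  rw [hrewrite]
  refine integral_mul_mul_integral_nonpos zero_le_one (hτ.mul (hP₂.continuous_deriv one_le_two))
    (fun x hx => ((hq x hx).const_mul c).continuousAt.continuousWithinAt)
    (fun x hx => (hq x (Ioo_subset_Icc_self hx)).const_mul c) (fun x hx => ?_) hc0
  rw [deriv_const_mul c (hq x (Ioo_subset_Icc_self hx))]
  exact hc1 x (Ioo_subset_Icc_self hx)

/-- Sign condition (30): under the hypotheses of the integration-by-parts identity,
if `c·(P₁(0)/P₂'(0)) ≤ 0` and `c·(P₁/P₂')' ≤ 0` on `[0,1]`, then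
`c·∫₀¹ τ(t) ∫ₜ¹ τ(s) P₁(t) P₂'(s) ds dt ≤ 0`. -/
theorem uniqueness_sign_condition
    (τ P₁ P₂ : ℝ → ℝ) (c : ℝ)
    (hτ : Continuous τ) (hτ0 : τ 0 = 0)
    (hP₁ : ContDiff ℝ 1 P₁) (hP₂ : ContDiff ℝ 2 P₂)
    (hP₂1 : P₂ 1 = 0)
    (hP₂' : ∀ t ∈ Icc (0:ℝ) 1, deriv P₂ t ≠ 0)
    (hc0 : c * (P₁ 0 / deriv P₂ 0) ≤ 0)
    (hc1 : ∀ t ∈ Icc (0:ℝ) 1, c * deriv (fun t => P₁ t / deriv P₂ t) t ≤ 0) :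
    c * ∫ t in (0:ℝ)..1, τ t * ∫ s in t..(1:ℝ), τ s * P₁ t * deriv P₂ s ≤ 0 :=
  uniqueness_sign_condition_general τ P₁ P₂ c hτ hP₁ hP₂ hP₂' hc0 hc1
end

section
/- Let 0 < β < 1 and F : [0,1] → ℝ be continuously differentiable. If τ : [0,1] → ℝ is continuous and satisfies the generalized Abel integral equation ∫₀ᵗ τ(η)(t-η)^{-β} dη = F(t) for all t ∈ [0,1], then τ(t) = (sin(βπ)/π)[F(0)·t^{β-1} + ∫₀ᵗ F'(z)(t-z)^{β-1} dz] for t ∈ (0,1]. -/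
/-!
Write `I_p g (t) = ∫₀ᵗ g(z) (t - z)^p dz` for `p > -1`. Fubini on the triangle `0 < η < z < t` and
the substitution `z = η + (t - η) v` give the semigroup law `I_p (I_q g) = B · I_{p+q+1} g` with
`B = ∫₀¹ (1 - v)^p v^q`, which is symmetric in `p` and `q`. Applying `I_{β-1}` to `I_{-β} τ = F`
therefore gives `I_{β-1} F (t) = Γ(β) Γ(1-β) ∫₀ᵗ τ = (π / sin βπ) ∫₀ᵗ τ`. On the other hand,
writing `F = F(0) + I_0 F'` and letting `I_{β-1}` and `I_0` commute,
`I_{β-1} F (t) = ∫₀ᵗ (F(0) s^{β-1} + I_{β-1} F' (s)) ds`. Differentiating in `t` gives the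
formula on `(0, 1)`, and continuity extends it to `t = 1`.
-/

open MeasureTheory intervalIntegral Set Real Filter

namespace Abel

/-- The Riemann–Liouville integral of order `p + 1`, without the factor `1 / Γ(p + 1)`. -/
noncomputable def abelIntegral (p : ℝ) (g : ℝ → ℝ) (t : ℝ) : ℝ :=
  ∫ z in (0:ℝ)..t, g z * (t - z) ^ p

/-- `kernelBeta p q = B(q + 1, p + 1)`. -/
noncomputable def kernelBeta (p q : ℝ) : ℝ :=
  ∫ v in (0:ℝ)..1, (1 - v) ^ p * v ^ q

lemma abelIntegral_zero (g : ℝ → ℝ) (t : ℝ) : abelIntegral 0 g t = ∫ z in (0:ℝ)..t, g z := by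
  simp [abelIntegral]

lemma intervalIntegrable_sub_rpow {q : ℝ} (hq : -1 < q) (c a b : ℝ) :
    IntervalIntegrable (fun z => (c - z) ^ q) volume a b := by
  simpa using (intervalIntegrable_rpow' (a := c - a) (b := c - b) hq).comp_sub_left c

lemma integral_sub_rpow {q : ℝ} (hq : -1 < q) (t : ℝ) :
    ∫ z in (0:ℝ)..t, (t - z) ^ q = t ^ (q + 1) / (q + 1) := by
  simpa [integral_rpow (Or.inl hq), zero_rpow (by linarith : q + 1 ≠ 0)] using
    integral_comp_sub_left (fun x => x ^ q) t (a := 0) (b := t)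

lemma kernelBeta_comm (p q : ℝ) : kernelBeta p q = kernelBeta q p := by
  have h := integral_comp_sub_left (fun v => (1 - v) ^ p * v ^ q) (1:ℝ) (a := 0) (b := 1)
  simp only [sub_sub_cancel, sub_self, sub_zero] at h
  rw [kernelBeta, kernelBeta, ← h]
  exact integral_congr fun v _ => mul_comm _ _

lemma kernelBeta_sub_one_neg {β : ℝ} (h0 : 0 < β) (h1 : β < 1) :
    kernelBeta (β - 1) (-β) = π / sin (π * β) := by
  have key := Complex.Gamma_mul_Gamma_eq_betaIntegral
    (s := ((1 - β : ℝ) : ℂ)) (t := ((β : ℝ) : ℂ)) (by simpa using h1) (by simpa using h0)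
  have hsum : ((1 - β : ℝ) : ℂ) + ((β : ℝ) : ℂ) = 1 := by push_cast; ring
  have hbeta : Complex.betaIntegral ((1 - β : ℝ) : ℂ) ((β : ℝ) : ℂ) = kernelBeta (β - 1) (-β) := by
    rw [Complex.betaIntegral, kernelBeta, ← intervalIntegral.integral_ofReal]
    refine integral_congr fun x hx => ?_
    rw [uIcc_of_le zero_le_one] at hx
    push_cast
    rw [Complex.ofReal_cpow (by linarith [hx.2]), Complex.ofReal_cpow hx.1, mul_comm]
    push_cast
    ring_nf
  rw [hsum, Complex.Gamma_one, one_mul, hbeta, Complex.Gamma_ofReal, Complex.Gamma_ofReal,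
    ← Complex.ofReal_mul, Complex.ofReal_inj] at key
  rw [← key, mul_comm, Real.Gamma_mul_Gamma_one_sub]

lemma integral_sub_rpow_mul_sub_rpow (p q : ℝ) {a t : ℝ} (hat : a < t) :
    ∫ z in a..t, (t - z) ^ p * (z - a) ^ q = (t - a) ^ (p + q + 1) * kernelBeta p q := by
  have hpos : 0 < t - a := sub_pos.2 hat
  have h := integral_comp_mul_add (a := 0) (b := 1) (fun z => (t - z) ^ p * (z - a) ^ q) hpos.ne' a
  simp only [mul_zero, zero_add, mul_one, sub_add_cancel, smul_eq_mul] at h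
  have hscale : EqOn (fun x => (t - ((t - a) * x + a)) ^ p * ((t - a) * x + a - a) ^ q)
      (fun x => (t - a) ^ (p + q) * ((1 - x) ^ p * x ^ q)) (uIcc 0 1) := by
    intro x hx
    rw [uIcc_of_le zero_le_one] at hx
    dsimp only
    rw [show t - ((t - a) * x + a) = (t - a) * (1 - x) by ring, add_sub_cancel_right,
      mul_rpow hpos.le (by linarith [hx.2]), mul_rpow hpos.le hx.1, rpow_add hpos]
    ring
  rw [integral_congr hscale, intervalIntegral.integral_const_mul, ← kernelBeta] at h
  rw [rpow_add hpos, rpow_one, mul_right_comm, h]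
  field_simp

lemma abelIntegral_eq_rpow_mul {p : ℝ} (hp : -1 < p) (g : ℝ → ℝ) {s : ℝ} (hs : 0 ≤ s) :
    abelIntegral p g s = s ^ (p + 1) * ∫ v in (0:ℝ)..1, g (s * v) * (1 - v) ^ p := by
  rcases hs.eq_or_lt with rfl | hs
  · simp [abelIntegral, zero_rpow (by linarith : p + 1 ≠ 0)]
  have h := integral_comp_mul_left (a := 0) (b := 1) (fun z => g z * (s - z) ^ p) hs.ne'
  simp only [mul_zero, mul_one, smul_eq_mul] at h
  have hscale : EqOn (fun v => g (s * v) * (s - s * v) ^ p)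
      (fun v => s ^ p * (g (s * v) * (1 - v) ^ p)) (uIcc 0 1) := by
    intro v hv
    rw [uIcc_of_le zero_le_one] at hv
    dsimp only
    rw [show s - s * v = s * (1 - v) by ring, mul_rpow hs.le (by linarith [hv.2])]
    ring
  rw [integral_congr hscale, intervalIntegral.integral_const_mul] at h
  rw [abelIntegral, rpow_add hs, rpow_one, mul_assoc, mul_left_comm, h]
  field_simp

lemma continuous_integral_comp_mul_mul_rpow {p : ℝ} (hp : -1 < p) {g : ℝ → ℝ}
    (hg : Continuous g) : Continuous fun s => ∫ v in (0:ℝ)..1, g (s * v) * (1 - v) ^ p := by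
  refine continuous_iff_continuousAt.2 fun s₀ => ?_
  obtain ⟨M, hM⟩ := (isCompact_closedBall (0:ℝ) (‖s₀‖ + 1)).exists_bound_of_continuousOn
    hg.continuousOn
  refine continuousAt_of_dominated_interval (bound := fun v => M * (1 - v) ^ p) ?_ ?_
    ((intervalIntegrable_sub_rpow hp 1 0 1).const_mul M) (ae_of_all _ fun v _ => by fun_prop)
  · exact Eventually.of_forall fun s => Measurable.aestronglyMeasurable (by fun_prop)
  · filter_upwards [Metric.ball_mem_nhds s₀ one_pos] with s hs
    refine ae_of_all _ fun v hv => ?_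
    rw [uIoc_of_le zero_le_one] at hv
    have hv1 : 0 ≤ 1 - v := by linarith [hv.2]
    have hsv : s * v ∈ Metric.closedBall (0:ℝ) (‖s₀‖ + 1) := by
      rw [mem_closedBall_zero_iff, norm_mul]
      have hs' : ‖s‖ ≤ ‖s₀‖ + 1 := by
        linarith [norm_le_norm_add_norm_sub' s s₀, (mem_ball_iff_norm.1 hs).le]
      have hv' : ‖v‖ ≤ 1 := by rw [Real.norm_eq_abs, abs_le]; constructor <;> linarith [hv.1, hv.2]
      nlinarith [norm_nonneg s, norm_nonneg v]
    rw [norm_mul, Real.norm_of_nonneg (rpow_nonneg hv1 _)]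
    exact mul_le_mul_of_nonneg_right (hM _ hsv) (rpow_nonneg hv1 _)

lemma continuousOn_abelIntegral {p : ℝ} (hp : -1 < p) {g : ℝ → ℝ} (hg : Continuous g) :
    ContinuousOn (abelIntegral p g) (Ici 0) := by
  refine ContinuousOn.congr ?_ fun s hs => abelIntegral_eq_rpow_mul hp g hs
  exact ((continuous_id.rpow_const fun _ => Or.inr (by linarith)).mul
    (continuous_integral_comp_mul_mul_rpow hp hg)).continuousOn

lemma setIntegral_Ioc_ite_lt (f : ℝ → ℝ) {z t : ℝ} (hz : z ∈ Ioc 0 t) :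
    ∫ η in Ioc 0 t, (if η < z then f η else 0) = ∫ η in (0:ℝ)..z, f η := by
  have hset : Ioc 0 t ∩ Iio z = Ioo 0 z := by
    ext η; simp only [mem_inter_iff, mem_Ioc, mem_Iio, mem_Ioo]
    constructor
    · exact fun h => ⟨h.1.1, h.2⟩
    · exact fun h => ⟨⟨h.1, h.2.le.trans hz.2⟩, h.2⟩
  rw [show (fun η => if η < z then f η else 0) = (Iio z).indicator f from rfl,
    setIntegral_indicator measurableSet_Iio, hset, integral_of_le hz.1.le,
    integral_Ioc_eq_integral_Ioo]

lemma setIntegral_Ioc_ite_gt (f : ℝ → ℝ) {η t : ℝ} (hη : η ∈ Ioc 0 t) :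
    ∫ z in Ioc 0 t, (if η < z then f z else 0) = ∫ z in η..t, f z := by
  have hset : Ioc 0 t ∩ Ioi η = Ioc η t := by
    ext z; simp only [mem_inter_iff, mem_Ioc, mem_Ioi]
    constructor
    · exact fun h => ⟨h.2, h.1.2⟩
    · exact fun h => ⟨⟨hη.1.trans h.1, h.2⟩, h.1⟩
  rw [show (fun z => if η < z then f z else 0) = (Ioi η).indicator f from rfl,
    setIntegral_indicator measurableSet_Ioi, hset, integral_of_le hη.2]

lemma integral_integral_triangle_swap {t : ℝ} (ht : 0 ≤ t) {f : ℝ → ℝ → ℝ}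
    (hf : Integrable (fun x : ℝ × ℝ => if x.2 < x.1 then f x.1 x.2 else 0)
      ((volume.restrict (Ioc 0 t)).prod (volume.restrict (Ioc 0 t)))) :
    ∫ z in (0:ℝ)..t, ∫ η in (0:ℝ)..z, f z η = ∫ η in (0:ℝ)..t, ∫ z in η..t, f z η := by
  rw [integral_of_le ht, integral_of_le ht]
  calc ∫ z in Ioc 0 t, ∫ η in (0:ℝ)..z, f z η
      = ∫ z in Ioc 0 t, ∫ η in Ioc 0 t, (if η < z then f z η else 0) :=
        setIntegral_congr_fun measurableSet_Ioc fun z hz => (setIntegral_Ioc_ite_lt _ hz).symm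
    _ = ∫ η in Ioc 0 t, ∫ z in Ioc 0 t, (if η < z then f z η else 0) :=
        integral_integral_swap hf
    _ = ∫ η in Ioc 0 t, ∫ z in η..t, f z η :=
        setIntegral_congr_fun measurableSet_Ioc fun η hη => setIntegral_Ioc_ite_gt _ hη

lemma integrable_triangle_kernel {t p q : ℝ} (hp : -1 < p) (hq : -1 < q) :
    Integrable (fun x : ℝ × ℝ => if x.2 < x.1 then (t - x.1) ^ p * (x.1 - x.2) ^ q else 0)
      ((volume.restrict (Ioc 0 t)).prod (volume.restrict (Ioc 0 t))) := by
  have hmeas : Measurable fun x : ℝ × ℝ =>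
      if x.2 < x.1 then (t - x.1) ^ p * (x.1 - x.2) ^ q else 0 :=
    Measurable.ite (measurableSet_lt measurable_snd measurable_fst) (by fun_prop) measurable_const
  rw [integrable_prod_iff hmeas.aestronglyMeasurable]
  constructor
  · refine ae_of_all _ fun z => ?_
    rw [show (fun η => if η < z then (t - z) ^ p * (z - η) ^ q else 0)
        = (Iio z).indicator fun η => (t - z) ^ p * (z - η) ^ q from rfl,
      integrable_indicator_iff measurableSet_Iio, IntegrableOn,
      Measure.restrict_restrict measurableSet_Iio]
    refine ((intervalIntegrable_sub_rpow hq z 0 z).const_mul _).1.mono_set fun η hη => ?_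
    exact ⟨hη.2.1, hη.1.le⟩
  · have hslice : ∀ z ∈ Ioc 0 t,
        ∫ η in Ioc 0 t, ‖if η < z then (t - z) ^ p * (z - η) ^ q else 0‖
          = z ^ (q + 1) / (q + 1) * (t - z) ^ p := by
      intro z hz
      have hnonneg (η : ℝ) (hη : η ∈ uIcc 0 z) : 0 ≤ (t - z) ^ p * (z - η) ^ q := by
        rw [uIcc_of_le hz.1.le] at hη
        exact mul_nonneg (rpow_nonneg (sub_nonneg.2 hz.2) _) (rpow_nonneg (sub_nonneg.2 hη.2) _)
      simp_rw [apply_ite norm, norm_zero]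
      rw [setIntegral_Ioc_ite_lt _ hz, integral_congr fun η hη => norm_of_nonneg (hnonneg η hη),
        intervalIntegral.integral_const_mul, integral_sub_rpow hq, mul_comm]
    refine Integrable.congr ?_
      ((ae_restrict_mem measurableSet_Ioc).mono fun z hz => (hslice z hz).symm)
    refine ((intervalIntegrable_sub_rpow hp t 0 t).continuousOn_mul ?_).1
    exact (continuousOn_id.rpow_const fun _ _ => Or.inr (by linarith)).div_const _

lemma integrable_triangle {t p q : ℝ} (hp : -1 < p) (hq : -1 < q) {u : ℝ → ℝ}
    (hu : Continuous u) :
    Integrable (fun x : ℝ × ℝ => if x.2 < x.1 then u x.2 * ((t - x.1) ^ p * (x.1 - x.2) ^ q) else 0)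
      ((volume.restrict (Ioc 0 t)).prod (volume.restrict (Ioc 0 t))) := by
  obtain ⟨M, hM⟩ := isCompact_Icc.exists_bound_of_continuousOn (hu.continuousOn (s := Icc 0 t))
  have hbound : ∀ᵐ x ∂(volume.restrict (Ioc 0 t)).prod (volume.restrict (Ioc 0 t)),
      ‖u x.2‖ ≤ M := by
    rw [Measure.prod_restrict]
    filter_upwards [ae_restrict_mem (measurableSet_Ioc.prod measurableSet_Ioc)] with x hx
    exact hM _ (Ioc_subset_Icc_self hx.2)
  refine ((integrable_triangle_kernel hp hq).bdd_mul
    (hu.comp continuous_snd).aestronglyMeasurable hbound).congr (ae_of_all _ fun x => ?_)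
  dsimp only
  split_ifs <;> simp

theorem abelIntegral_abelIntegral {p q : ℝ} (hp : -1 < p) (hq : -1 < q) {u : ℝ → ℝ}
    (hu : Continuous u) {t : ℝ} (ht : 0 ≤ t) :
    abelIntegral p (abelIntegral q u) t = kernelBeta p q * abelIntegral (p + q + 1) u t := by
  calc abelIntegral p (abelIntegral q u) t
      = ∫ z in (0:ℝ)..t, ∫ η in (0:ℝ)..z, u η * ((t - z) ^ p * (z - η) ^ q) := by
        refine integral_congr fun z _ => ?_
        rw [abelIntegral, ← intervalIntegral.integral_mul_const]
        exact integral_congr fun η _ => by ring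
    _ = ∫ η in (0:ℝ)..t, ∫ z in η..t, u η * ((t - z) ^ p * (z - η) ^ q) :=
        integral_integral_triangle_swap ht (integrable_triangle hp hq hu)
    _ = ∫ η in (0:ℝ)..t, kernelBeta p q * (u η * (t - η) ^ (p + q + 1)) := by
        refine integral_congr_ae ?_
        filter_upwards [Measure.ae_ne volume t] with η hηt hη
        rw [uIoc_of_le ht] at hη
        rw [intervalIntegral.integral_const_mul,
          integral_sub_rpow_mul_sub_rpow p q (lt_of_le_of_ne hη.2 hηt)]
        ring
    _ = kernelBeta p q * abelIntegral (p + q + 1) u t := intervalIntegral.integral_const_mul _ _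

lemma abelIntegral_comm {p q : ℝ} (hp : -1 < p) (hq : -1 < q) {u : ℝ → ℝ}
    (hu : Continuous u) {t : ℝ} (ht : 0 ≤ t) :
    abelIntegral p (abelIntegral q u) t = abelIntegral q (abelIntegral p u) t := by
  rw [abelIntegral_abelIntegral hp hq hu ht, abelIntegral_abelIntegral hq hp hu ht, kernelBeta_comm,
    add_comm p q]

theorem abelIntegral_eq_integral_of_contDiff {p : ℝ} (hp : -1 < p) {F : ℝ → ℝ}
    (hF : ContDiff ℝ 1 F) {t : ℝ} (ht : 0 ≤ t) :
    abelIntegral p F t = ∫ s in (0:ℝ)..t, (F 0 * s ^ p + abelIntegral p (deriv F) s) := by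
  have hF' : Continuous (deriv F) := hF.continuous_deriv le_rfl
  have hftc (z : ℝ) : F z = F 0 + abelIntegral 0 (deriv F) z := by
    rw [abelIntegral_zero, integral_deriv_eq_sub (fun x _ => hF.differentiable one_ne_zero x)
      (hF'.intervalIntegrable _ _)]
    ring
  have hprim : Continuous (abelIntegral 0 (deriv F)) := by
    simp_rw [funext (abelIntegral_zero (deriv F))]
    exact continuous_primitive (fun _ _ => hF'.intervalIntegrable _ _) 0
  have hkernel := intervalIntegrable_sub_rpow hp t 0 t
  have hI : IntervalIntegrable (abelIntegral p (deriv F)) volume 0 t :=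
    ((continuousOn_abelIntegral hp hF').mono fun s hs => by
      rw [uIcc_of_le ht] at hs; exact hs.1).intervalIntegrable
  calc abelIntegral p F t
      = ∫ z in (0:ℝ)..t, (F 0 * (t - z) ^ p + abelIntegral 0 (deriv F) z * (t - z) ^ p) :=
        integral_congr fun z _ => by rw [hftc z, add_mul]
    _ = F 0 * (∫ s in (0:ℝ)..t, s ^ p) + abelIntegral p (abelIntegral 0 (deriv F)) t := by
        rw [integral_add (hkernel.const_mul _) (hkernel.continuousOn_mul hprim.continuousOn),
          intervalIntegral.integral_const_mul, integral_sub_rpow hp, integral_rpow (Or.inl hp),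
          zero_rpow (by linarith), sub_zero]
        rfl
    _ = ∫ s in (0:ℝ)..t, (F 0 * s ^ p + abelIntegral p (deriv F) s) := by
        rw [abelIntegral_comm hp (by norm_num) hF' ht, abelIntegral_zero,
          integral_add ((intervalIntegrable_rpow' hp).const_mul _) hI,
          intervalIntegral.integral_const_mul]

theorem abelIntegral_sub_one_of_abelIntegral_neg_eq {β : ℝ} (h0 : 0 < β) (h1 : β < 1)
    {F τ : ℝ → ℝ} (hτ : Continuous τ) {t : ℝ} (ht : 0 ≤ t)
    (habel : ∀ s ∈ Icc 0 t, abelIntegral (-β) τ s = F s) :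
    abelIntegral (β - 1) F t = π / sin (π * β) * ∫ x in (0:ℝ)..t, τ x := by
  calc abelIntegral (β - 1) F t = abelIntegral (β - 1) (abelIntegral (-β) τ) t :=
        integral_congr fun z hz => by rw [uIcc_of_le ht] at hz; rw [habel z hz]
    _ = kernelBeta (β - 1) (-β) * abelIntegral (β - 1 + -β + 1) τ t :=
        abelIntegral_abelIntegral (by linarith) (by linarith) hτ ht
    _ = π / sin (π * β) * ∫ x in (0:ℝ)..t, τ x := by
        rw [kernelBeta_sub_one_neg h0 h1, show β - 1 + -β + 1 = 0 by ring, abelIntegral_zero]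

lemma eqOn_Ioc_of_forall_integral_eq {f g : ℝ → ℝ} {a b : ℝ} (hf : ContinuousOn f (Ioc a b))
    (hg : ContinuousOn g (Ioc a b)) (hfi : IntervalIntegrable f volume a b)
    (hgi : IntervalIntegrable g volume a b)
    (h : ∀ t ∈ Ioc a b, ∫ x in a..t, f x = ∫ x in a..t, g x) : EqOn f g (Ioc a b) := by
  have hderiv {f : ℝ → ℝ} (hf : ContinuousOn f (Ioc a b)) (hfi : IntervalIntegrable f volume a b)
      {x : ℝ} (hx : x ∈ Ioo a b) : HasDerivAt (fun t => ∫ y in a..t, f y) (f x) x :=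
    integral_hasDerivAt_right
      (hfi.mono_set (uIcc_subset_uIcc_left (Icc_subset_uIcc (Ioo_subset_Icc_self hx))))
      ((hf.mono Ioo_subset_Ioc_self).stronglyMeasurableAtFilter isOpen_Ioo x hx)
      ((hf.mono Ioo_subset_Ioc_self).continuousAt (Ioo_mem_nhds hx.1 hx.2))
  refine EqOn.of_subset_closure (s := Ioo a b) (fun x hx => ?_) hf hg Ioo_subset_Ioc_self ?_
  · refine (hderiv hf hfi hx).unique ((hderiv hg hgi hx).congr_of_eventuallyEq ?_)
    filter_upwards [Ioo_mem_nhds hx.1 hx.2] with y hy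
    exact h y ⟨hy.1, hy.2.le⟩
  · intro x hx
    rw [closure_Ioo (hx.1.trans_le hx.2).ne]
    exact Ioc_subset_Icc_self hx

end Abel

open Abel in
/-- Inversion formula for the generalized Abel integral equation of the first kind. -/
theorem abel_inversion
    (β : ℝ) (hβ0 : 0 < β) (hβ1 : β < 1)
    (F τ : ℝ → ℝ) (hF : ContDiff ℝ 1 F) (hτ : Continuous τ)
    (habel : ∀ t ∈ Icc (0:ℝ) 1, ∫ η in (0:ℝ)..t, τ η * (t - η) ^ (-β) = F t) :
    ∀ t ∈ Ioc (0:ℝ) 1,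
      τ t = (Real.sin (β * π) / π) *
        (F 0 * t ^ (β - 1) + ∫ z in (0:ℝ)..t, deriv F z * (t - z) ^ (β - 1)) := by
  have hsin : sin (π * β) ≠ 0 :=
    (sin_pos_of_pos_of_lt_pi (by positivity) (by nlinarith [pi_pos])).ne'
  have hI : ContinuousOn (abelIntegral (β - 1) (deriv F)) (Ici 0) :=
    continuousOn_abelIntegral (by linarith) (hF.continuous_deriv le_rfl)
  set H : ℝ → ℝ := fun s => F 0 * s ^ (β - 1) + abelIntegral (β - 1) (deriv F) s
  have hH : ContinuousOn H (Ioc 0 1) :=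
    (continuousOn_const.mul (continuousOn_id.rpow_const fun s hs => Or.inl hs.1.ne')).add
      (hI.mono fun s hs => hs.1.le)
  have hHi : IntervalIntegrable H volume 0 1 :=
    ((intervalIntegrable_rpow' (by linarith)).const_mul _).add
      ((hI.mono fun s hs => by rw [uIcc_of_le zero_le_one] at hs; exact hs.1).intervalIntegrable)
  have key (t : ℝ) (ht : t ∈ Ioc (0:ℝ) 1) :
      ∫ x in (0:ℝ)..t, τ x = ∫ x in (0:ℝ)..t, sin (π * β) / π * H x := by
    have hinv := abelIntegral_sub_one_of_abelIntegral_neg_eq hβ0 hβ1 hτ ht.1.le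
      fun s hs => habel s ⟨hs.1, hs.2.trans ht.2⟩
    rw [abelIntegral_eq_integral_of_contDiff (by linarith) hF ht.1.le] at hinv
    rw [intervalIntegral.integral_const_mul, hinv]
    field_simp
  intro t ht
  rw [mul_comm β π]
  exact eqOn_Ioc_of_forall_integral_eq hτ.continuousOn (continuousOn_const.mul hH)
    (hτ.intervalIntegrable _ _) (hHi.const_mul _) key ht
end
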